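/- Generalized Grothendieck–Hölder upper bound: for all p,q,r ∈ [1,∞] and l,m,n ∈ ℕ, ‖μ_{l,m,n}‖_{p,q,r} ≤ K_G · l^{|1/q−1/2|} · m^{1−1/p} · n^{1/r}, where K_G is the Grothendieck constant over F. -/
import Mathlib


open scoped ENNReal BigOperators
open Matrix

/-- The vector ℓ^p norm on `Fin n → 𝕜` for `p ∈ [1,∞]`. -/
noncomputable def lpNorm (p : ℝ≥0∞) {n : ℕ} {𝕜 : Type*} [RCLike 𝕜] (x : Fin n → 𝕜) : ℝ :=
  if p = ∞ then ⨆ i, ‖x i‖ else (∑ i, ‖x i‖ ^ p.toReal) ^ (1 / p.toReal)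

/-- The matrix (p,q)-operator norm: `max_{z ≠ 0} ‖Az‖_q / ‖z‖_p`. -/
noncomputable def opNorm (p q : ℝ≥0∞) {m n : ℕ} {𝕜 : Type*} [RCLike 𝕜]
    (A : Matrix (Fin m) (Fin n) 𝕜) : ℝ :=
  ⨆ z : {z : Fin n → 𝕜 // z ≠ 0}, lpNorm q (A.mulVec z.1) / lpNorm p z.1

section helpers

variable {𝕜 : Type*} [RCLike 𝕜]

lemma one_le_toReal {a : ℝ≥0∞} (ha : 1 ≤ a) (ha' : a ≠ ∞) : 1 ≤ a.toReal := by
  simpa using ENNReal.toReal_mono ha' ha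

lemma lpNorm_nonneg (p : ℝ≥0∞) {n : ℕ} (x : Fin n → 𝕜) : 0 ≤ lpNorm p x := by
  unfold lpNorm
  split
  · exact Real.iSup_nonneg fun i => norm_nonneg _
  · positivity

lemma norm_le_lpNorm {p : ℝ≥0∞} (hp : 1 ≤ p) {n : ℕ} (x : Fin n → 𝕜) (i : Fin n) :
    ‖x i‖ ≤ lpNorm p x := by
  unfold lpNorm
  split
  · exact le_ciSup (f := fun j => ‖x j‖) (Set.Finite.bddAbove (Set.finite_range _)) i
  · rename_i hp'
    have ht : 1 ≤ p.toReal := one_le_toReal hp hp'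
    have ht0 : p.toReal ≠ 0 := by linarith
    have h1 : ‖x i‖ = (‖x i‖ ^ p.toReal) ^ (1 / p.toReal) := by
      rw [one_div, Real.rpow_rpow_inv (norm_nonneg _) ht0]
    rw [h1]
    apply Real.rpow_le_rpow (by positivity)
      (Finset.single_le_sum (fun j _ => by positivity) (Finset.mem_univ i)) (by positivity)

lemma lpNorm_pos {p : ℝ≥0∞} (hp : 1 ≤ p) {n : ℕ} {x : Fin n → 𝕜} (hx : x ≠ 0) :
    0 < lpNorm p x := by
  obtain ⟨i, hi⟩ : ∃ i, x i ≠ 0 := by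
    by_contra h; push_neg at h; exact hx (funext h)
  exact lt_of_lt_of_le (norm_pos_iff.2 hi) (norm_le_lpNorm hp x i)

lemma add_rpow_le_rpow_add' {u v c : ℝ} (hu : 0 ≤ u) (hv : 0 ≤ v) (hc : 1 ≤ c) :
    u ^ c + v ^ c ≤ (u + v) ^ c := by
  have h := NNReal.coe_le_coe.2 (NNReal.add_rpow_le_rpow_add u.toNNReal v.toNNReal hc)
  push_cast at h
  rwa [Real.coe_toNNReal u hu, Real.coe_toNNReal v hv] at h

lemma sum_rpow_le_rpow_sum {ι : Type*} (s : Finset ι) {c : ℝ} (hc : 1 ≤ c) (z : ι → ℝ)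
    (hz : ∀ i, 0 ≤ z i) : ∑ i ∈ s, z i ^ c ≤ (∑ i ∈ s, z i) ^ c := by
  induction s using Finset.cons_induction with
  | empty => simp [Real.zero_rpow (by linarith : c ≠ 0)]
  | cons a s ha ih =>
    rw [Finset.sum_cons, Finset.sum_cons]
    have h1 : z a ^ c + ∑ i ∈ s, z i ^ c ≤ z a ^ c + (∑ i ∈ s, z i) ^ c := by linarith
    exact h1.trans (add_rpow_le_rpow_add' (hz a) (Finset.sum_nonneg fun i _ => hz i) hc)

lemma lpNorm_antitone {a b : ℝ≥0∞} (ha : 1 ≤ a) (hab : a ≤ b) {n : ℕ} (x : Fin n → 𝕜) :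
    lpNorm b x ≤ lpNorm a x := by
  by_cases hb : b = ∞
  · subst hb
    by_cases ha' : a = ∞
    · subst ha'; exact le_rfl
    · have : lpNorm (∞ : ℝ≥0∞) x = ⨆ i, ‖x i‖ := by unfold lpNorm; rw [if_pos rfl]
      rw [this]
      exact Real.iSup_le (fun i => norm_le_lpNorm ha x i) (lpNorm_nonneg _ _)
  · have ha' : a ≠ ∞ := by
      intro h; exact hb (top_le_iff.1 (h ▸ hab))
    have hta : 1 ≤ a.toReal := one_le_toReal ha ha'
    have hta0 : a.toReal ≠ 0 := by linarith
    have htab : a.toReal ≤ b.toReal := ENNReal.toReal_mono hb hab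
    have htb0 : b.toReal ≠ 0 := by linarith
    unfold lpNorm
    rw [if_neg hb, if_neg ha']
    have h1 : ∑ i, ‖x i‖ ^ b.toReal ≤ (∑ i, ‖x i‖ ^ a.toReal) ^ (b.toReal / a.toReal) := by
      have hc : 1 ≤ b.toReal / a.toReal := by
        rw [le_div_iff₀ (by linarith)]; linarith
      have := sum_rpow_le_rpow_sum Finset.univ hc (fun i => ‖x i‖ ^ a.toReal)
        (fun i => by positivity)
      calc ∑ i, ‖x i‖ ^ b.toReal = ∑ i, (‖x i‖ ^ a.toReal) ^ (b.toReal / a.toReal) := by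
            refine Finset.sum_congr rfl fun i _ => ?_
            rw [← Real.rpow_mul (norm_nonneg _)]
            congr 1
            field_simp
        _ ≤ _ := this
    calc (∑ i, ‖x i‖ ^ b.toReal) ^ (1 / b.toReal)
        ≤ ((∑ i, ‖x i‖ ^ a.toReal) ^ (b.toReal / a.toReal)) ^ (1 / b.toReal) :=
          Real.rpow_le_rpow (by positivity) h1 (by positivity)
      _ = (∑ i, ‖x i‖ ^ a.toReal) ^ (1 / a.toReal) := by
          rw [← Real.rpow_mul (by positivity)]
          congr 1
          field_simp

lemma lpNorm_le_rpow_mul {a b : ℝ≥0∞} (ha : 1 ≤ a) (hab : a ≤ b) {n : ℕ} (x : Fin n → 𝕜) :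
    lpNorm a x ≤ (n : ℝ) ^ (1 / a.toReal - 1 / b.toReal) * lpNorm b x := by
  by_cases ha' : a = ∞
  · have hb : b = ∞ := top_le_iff.1 (ha' ▸ hab)
    subst hb; subst ha'
    simp [Real.rpow_zero]
  have hta : 1 ≤ a.toReal := one_le_toReal ha ha'
  have hta0 : a.toReal ≠ 0 := by linarith
  by_cases hb : b = ∞
  · subst hb
    have htop : (∞ : ℝ≥0∞).toReal = 0 := rfl
    rw [htop]
    unfold lpNorm
    rw [if_neg ha', if_pos rfl]
    have hsup : 0 ≤ ⨆ i, ‖x i‖ := Real.iSup_nonneg fun i => norm_nonneg _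
    have h1 : ∑ i, ‖x i‖ ^ a.toReal ≤ (n : ℝ) * (⨆ i, ‖x i‖) ^ a.toReal := by
      calc ∑ i, ‖x i‖ ^ a.toReal ≤ ∑ _i : Fin n, (⨆ j, ‖x j‖) ^ a.toReal :=
            Finset.sum_le_sum fun i _ => Real.rpow_le_rpow (norm_nonneg _)
              (le_ciSup (f := fun j => ‖x j‖) (Set.Finite.bddAbove (Set.finite_range _)) i)
              (by linarith)
        _ = (n : ℝ) * (⨆ j, ‖x j‖) ^ a.toReal := by
            rw [Finset.sum_const, Finset.card_univ, Fintype.card_fin, nsmul_eq_mul]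
    calc (∑ i, ‖x i‖ ^ a.toReal) ^ (1 / a.toReal)
        ≤ ((n : ℝ) * (⨆ i, ‖x i‖) ^ a.toReal) ^ (1 / a.toReal) :=
          Real.rpow_le_rpow (by positivity) h1 (by positivity)
      _ = (n : ℝ) ^ (1 / a.toReal - 1 / 0) * ⨆ i, ‖x i‖ := by
          rw [Real.mul_rpow (by positivity) (by positivity),
            ← Real.rpow_mul hsup]
          rw [mul_one_div, div_self hta0, Real.rpow_one]
          norm_num
  · have htab : a.toReal ≤ b.toReal := ENNReal.toReal_mono hb hab
    have htb0 : b.toReal ≠ 0 := by linarith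
    unfold lpNorm
    rw [if_neg hb, if_neg ha']
    have hp1 : 1 ≤ b.toReal / a.toReal := by
      rw [le_div_iff₀ (by linarith)]; linarith
    have key := Real.inner_le_weight_mul_Lp_of_nonneg Finset.univ hp1
      (fun _ => (1 : ℝ)) (fun i => ‖x i‖ ^ a.toReal) (fun _ => zero_le_one)
      (fun i => by positivity)
    simp only [one_mul] at key
    rw [show (∑ _i : Fin n, (1:ℝ)) = (n:ℝ) by simp] at key
    have hfi : ∀ i : Fin n, (‖x i‖ ^ a.toReal) ^ (b.toReal / a.toReal) = ‖x i‖ ^ b.toReal :=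
      fun i => by
        rw [← Real.rpow_mul (norm_nonneg _)]
        congr 1
        field_simp
    rw [Finset.sum_congr rfl (fun i _ => hfi i)] at key
    calc (∑ i, ‖x i‖ ^ a.toReal) ^ (1 / a.toReal)
        ≤ ((n:ℝ) ^ (1 - (b.toReal / a.toReal)⁻¹) *
            (∑ i, ‖x i‖ ^ b.toReal) ^ (b.toReal / a.toReal)⁻¹) ^ (1 / a.toReal) :=
          Real.rpow_le_rpow (by positivity) key (by positivity)
      _ = (n : ℝ) ^ (1 / a.toReal - 1 / b.toReal) * (∑ i, ‖x i‖ ^ b.toReal) ^ (1 / b.toReal) := by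
          rw [Real.mul_rpow (by positivity) (by positivity),
            ← Real.rpow_mul (by positivity : (0:ℝ) ≤ (n:ℝ)),
            ← Real.rpow_mul (by positivity)]
          have e1 : (1 - (b.toReal / a.toReal)⁻¹) * (1 / a.toReal)
              = 1 / a.toReal - 1 / b.toReal := by
            rw [inv_div]
            field_simp
          have e2 : (b.toReal / a.toReal)⁻¹ * (1 / a.toReal) = 1 / b.toReal := by
            rw [inv_div]
            field_simp
          rw [e1, e2]

lemma lpNorm_one_eq {n : ℕ} (x : Fin n → 𝕜) : lpNorm 1 x = ∑ i, ‖x i‖ := by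
  unfold lpNorm
  rw [if_neg (by simp : (1:ℝ≥0∞) ≠ ∞)]
  simp [ENNReal.toReal_one]

lemma lpNorm_single_one {a : ℝ≥0∞} (ha : 1 ≤ a) {t : ℕ} (j : Fin t) :
    lpNorm a (Pi.single j (1:𝕜)) = 1 := by
  have hnorm : ∀ i : Fin t, ‖(Pi.single j (1:𝕜) : Fin t → 𝕜) i‖ = if i = j then 1 else 0 := by
    intro i
    rcases eq_or_ne i j with rfl | h
    · simp
    · simp [Pi.single_eq_of_ne h, if_neg h]
  unfold lpNorm
  split
  · apply le_antisymm
    · refine Real.iSup_le (fun i => ?_) zero_le_one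
      rw [hnorm i]; split <;> norm_num
    · have := le_ciSup (f := fun i : Fin t => ‖(Pi.single j (1:𝕜) : Fin t → 𝕜) i‖)
        (Set.Finite.bddAbove (Set.finite_range _)) j
      simpa [hnorm j] using this
  · rename_i ha'
    have hta : 1 ≤ a.toReal := one_le_toReal ha ha'
    have hta0 : a.toReal ≠ 0 := by linarith
    have : ∀ i : Fin t, ‖(Pi.single j (1:𝕜) : Fin t → 𝕜) i‖ ^ a.toReal = if i = j then 1 else 0 := by
      intro i
      rw [hnorm i]
      split
      · simp
      · exact Real.zero_rpow hta0
    rw [Finset.sum_congr rfl (fun i _ => this i)]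
    simp

lemma opNorm_nonneg (a b : ℝ≥0∞) {s t : ℕ} (A : Matrix (Fin s) (Fin t) 𝕜) :
    0 ≤ opNorm a b A :=
  Real.iSup_nonneg fun z => div_nonneg (lpNorm_nonneg _ _) (lpNorm_nonneg _ _)

lemma opNorm_ratio_le {a b : ℝ≥0∞} (ha : 1 ≤ a) (hb : 1 ≤ b) {s t : ℕ}
    (A : Matrix (Fin s) (Fin t) 𝕜) {z : Fin t → 𝕜} (hz : z ≠ 0) :
    lpNorm b (A.mulVec z) / lpNorm a z ≤ ∑ i, ∑ j, ‖A i j‖ := by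
  rw [div_le_iff₀ (lpNorm_pos ha hz)]
  calc lpNorm b (A.mulVec z) ≤ lpNorm 1 (A.mulVec z) := lpNorm_antitone le_rfl hb _
    _ = ∑ i, ‖A.mulVec z i‖ := lpNorm_one_eq _
    _ ≤ ∑ i, ∑ j, ‖A i j‖ * ‖z j‖ := by
        refine Finset.sum_le_sum fun i _ => ?_
        calc ‖A.mulVec z i‖ = ‖∑ j, A i j * z j‖ := by
              simp [Matrix.mulVec, dotProduct]
          _ ≤ ∑ j, ‖A i j * z j‖ := norm_sum_le _ _
          _ = ∑ j, ‖A i j‖ * ‖z j‖ := by simp [norm_mul]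
    _ ≤ ∑ i, ∑ j, ‖A i j‖ * lpNorm a z := by
        refine Finset.sum_le_sum fun i _ => Finset.sum_le_sum fun j _ => ?_
        exact mul_le_mul_of_nonneg_left (norm_le_lpNorm ha z j) (norm_nonneg _)
    _ = (∑ i, ∑ j, ‖A i j‖) * lpNorm a z := by
        rw [Finset.sum_mul]
        exact Finset.sum_congr rfl fun i _ => (Finset.sum_mul _ _ _).symm

lemma opNorm_bddAbove {a b : ℝ≥0∞} (ha : 1 ≤ a) (hb : 1 ≤ b) {s t : ℕ}
    (A : Matrix (Fin s) (Fin t) 𝕜) :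
    BddAbove (Set.range fun z : {z : Fin t → 𝕜 // z ≠ 0} =>
      lpNorm b (A.mulVec z.1) / lpNorm a z.1) := by
  refine ⟨∑ i, ∑ j, ‖A i j‖, ?_⟩
  rintro x ⟨z, rfl⟩
  exact opNorm_ratio_le ha hb A z.2

lemma ratio_le_opNorm {a b : ℝ≥0∞} (ha : 1 ≤ a) (hb : 1 ≤ b) {s t : ℕ}
    (A : Matrix (Fin s) (Fin t) 𝕜) {z : Fin t → 𝕜} (hz : z ≠ 0) :
    lpNorm b (A.mulVec z) / lpNorm a z ≤ opNorm a b A :=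
  le_ciSup (opNorm_bddAbove ha hb A) ⟨z, hz⟩

lemma entry_le_opNorm {a b : ℝ≥0∞} (ha : 1 ≤ a) (hb : 1 ≤ b) {s t : ℕ}
    (A : Matrix (Fin s) (Fin t) 𝕜) (i : Fin s) (j : Fin t) :
    ‖A i j‖ ≤ opNorm a b A := by
  have hz : (Pi.single j (1:𝕜) : Fin t → 𝕜) ≠ 0 := by
    intro h
    have := congrFun h j
    simp at this
  have h1 : lpNorm a (Pi.single j (1:𝕜)) = 1 := lpNorm_single_one ha j
  calc ‖A i j‖ = ‖A.mulVec (Pi.single j (1:𝕜)) i‖ := by simp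
    _ ≤ lpNorm b (A.mulVec (Pi.single j (1:𝕜))) := norm_le_lpNorm hb _ i
    _ = lpNorm b (A.mulVec (Pi.single j (1:𝕜))) / lpNorm a (Pi.single j (1:𝕜)) := by
        rw [h1, div_one]
    _ ≤ opNorm a b A := ratio_le_opNorm ha hb A hz

lemma opNorm_pos {a b : ℝ≥0∞} (ha : 1 ≤ a) (hb : 1 ≤ b) {s t : ℕ}
    {A : Matrix (Fin s) (Fin t) 𝕜} (hA : A ≠ 0) : 0 < opNorm a b A := by
  obtain ⟨i, j, hij⟩ : ∃ i j, A i j ≠ 0 := by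
    by_contra h
    push_neg at h
    exact hA (by ext i j; simpa using h i j)
  exact lt_of_lt_of_le (norm_pos_iff.2 hij) (entry_le_opNorm ha hb A i j)

lemma opNorm_le_mul {s t : ℕ} (A : Matrix (Fin s) (Fin t) 𝕜)
    {a b a' b' : ℝ≥0∞} (ha : 1 ≤ a) (ha' : 1 ≤ a') (hb' : 1 ≤ b')
    {c d : ℝ} (hc : 0 ≤ c) (hd : 0 ≤ d)
    (hnum : ∀ v : Fin s → 𝕜, lpNorm b v ≤ c * lpNorm b' v)
    (hden : ∀ v : Fin t → 𝕜, lpNorm a' v ≤ d * lpNorm a v) :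
    opNorm a b A ≤ c * d * opNorm a' b' A := by
  cases isEmpty_or_nonempty {z : Fin t → 𝕜 // z ≠ 0} with
  | inl h =>
    unfold opNorm
    rw [Real.iSup_of_isEmpty]
    exact mul_nonneg (mul_nonneg hc hd) (opNorm_nonneg _ _ _)
  | inr h =>
    apply ciSup_le
    rintro ⟨z, hz⟩
    have h1 : 0 < lpNorm a z := lpNorm_pos ha hz
    have h2 : 0 < lpNorm a' z := lpNorm_pos ha' hz
    have step : lpNorm b (A.mulVec z) / lpNorm a z
        ≤ c * d * (lpNorm b' (A.mulVec z) / lpNorm a' z) := by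
      rw [← mul_div_assoc, div_le_div_iff₀ h1 h2]
      have t1 : lpNorm b (A.mulVec z) * lpNorm a' z
          ≤ (c * lpNorm b' (A.mulVec z)) * lpNorm a' z :=
        mul_le_mul_of_nonneg_right (hnum _) h2.le
      have t2 : (c * lpNorm b' (A.mulVec z)) * lpNorm a' z
          ≤ (c * lpNorm b' (A.mulVec z)) * (d * lpNorm a z) :=
        mul_le_mul_of_nonneg_left (hden z) (mul_nonneg hc (lpNorm_nonneg _ _))
      exact t1.trans (t2.trans_eq (by ring))
    exact step.trans (mul_le_mul_of_nonneg_left (ratio_le_opNorm ha' hb' A hz)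
      (mul_nonneg hc hd))

end helpers

/-- The (p,q,r)-norm of the Strassen matrix multiplication tensor μ_{l,m,n}:
`max` over nonzero `X ∈ 𝕜^{l×m}`, `M ∈ 𝕜^{m×n}`, `Y ∈ 𝕜^{n×l}` of
`|tr(XMY)| / (‖X‖_{p,q} ‖Y‖_{q,r} ‖M‖_{r,p})`. -/
noncomputable def muNorm (𝕜 : Type*) [RCLike 𝕜] (p q r : ℝ≥0∞) (l m n : ℕ) : ℝ :=
  ⨆ T : {T : Matrix (Fin l) (Fin m) 𝕜 × Matrix (Fin m) (Fin n) 𝕜 × Matrix (Fin n) (Fin l) 𝕜 //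
      T.1 ≠ 0 ∧ T.2.1 ≠ 0 ∧ T.2.2 ≠ 0},
    ‖(T.1.1 * T.1.2.1 * T.1.2.2).trace‖ /
      (opNorm p q T.1.1 * opNorm q r T.1.2.2 * opNorm r p T.1.2.1)

section mu
variable {𝕜 : Type*} [RCLike 𝕜]

lemma muNorm_nonneg (p q r : ℝ≥0∞) (l m n : ℕ) : 0 ≤ muNorm 𝕜 p q r l m n :=
  Real.iSup_nonneg fun T => div_nonneg (norm_nonneg _)
    (mul_nonneg (mul_nonneg (opNorm_nonneg _ _ _) (opNorm_nonneg _ _ _)) (opNorm_nonneg _ _ _))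

lemma trace_bound {p q r : ℝ≥0∞} (hp : 1 ≤ p) (hq : 1 ≤ q) (hr : 1 ≤ r) {l m n : ℕ}
    (X : Matrix (Fin l) (Fin m) 𝕜) (M : Matrix (Fin m) (Fin n) 𝕜) (Y : Matrix (Fin n) (Fin l) 𝕜) :
    ‖(X * M * Y).trace‖ ≤
      (l * m * n : ℕ) * (opNorm p q X * opNorm q r Y * opNorm r p M) := by
  have hXn : 0 ≤ opNorm p q X := opNorm_nonneg _ _ _
  have hYn : 0 ≤ opNorm q r Y := opNorm_nonneg _ _ _
  have hMn : 0 ≤ opNorm r p M := opNorm_nonneg _ _ _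
  calc ‖(X * M * Y).trace‖ = ‖∑ i, ∑ k, (∑ j, X i j * M j k) * Y k i‖ := by
        simp [Matrix.trace, Matrix.diag, Matrix.mul_apply]
    _ ≤ ∑ i, ∑ k, ∑ j, ‖X i j‖ * ‖M j k‖ * ‖Y k i‖ := by
        refine (norm_sum_le _ _).trans (Finset.sum_le_sum fun i _ => ?_)
        refine (norm_sum_le _ _).trans (Finset.sum_le_sum fun k _ => ?_)
        calc ‖(∑ j, X i j * M j k) * Y k i‖ = ‖∑ j, X i j * M j k‖ * ‖Y k i‖ := by
              simp [norm_mul]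
          _ ≤ (∑ j, ‖X i j‖ * ‖M j k‖) * ‖Y k i‖ := by
              refine mul_le_mul_of_nonneg_right ?_ (norm_nonneg _)
              refine (norm_sum_le _ _).trans (le_of_eq (Finset.sum_congr rfl fun j _ => ?_))
              simp [norm_mul]
          _ = ∑ j, ‖X i j‖ * ‖M j k‖ * ‖Y k i‖ := (Finset.sum_mul _ _ _)
    _ ≤ ∑ _i : Fin l, ∑ _k : Fin n, ∑ _j : Fin m,
          opNorm p q X * opNorm r p M * opNorm q r Y := by
        refine Finset.sum_le_sum fun i _ => Finset.sum_le_sum fun k _ =>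
          Finset.sum_le_sum fun j _ => ?_
        have e1 : ‖X i j‖ ≤ opNorm p q X := entry_le_opNorm hp hq X i j
        have e2 : ‖M j k‖ ≤ opNorm r p M := entry_le_opNorm hr hp M j k
        have e3 : ‖Y k i‖ ≤ opNorm q r Y := entry_le_opNorm hq hr Y k i
        exact mul_le_mul (mul_le_mul e1 e2 (norm_nonneg _) hXn) e3 (norm_nonneg _)
          (mul_nonneg hXn hMn)
    _ = (l * m * n : ℕ) * (opNorm p q X * opNorm q r Y * opNorm r p M) := by
        simp [Finset.sum_const, Finset.card_univ]
        ring

lemma muNorm_bddAbove (p q r : ℝ≥0∞) (hp : 1 ≤ p) (hq : 1 ≤ q) (hr : 1 ≤ r) (l m n : ℕ) :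
    BddAbove (Set.range fun T : {T : Matrix (Fin l) (Fin m) 𝕜 × Matrix (Fin m) (Fin n) 𝕜 ×
        Matrix (Fin n) (Fin l) 𝕜 // T.1 ≠ 0 ∧ T.2.1 ≠ 0 ∧ T.2.2 ≠ 0} =>
      ‖(T.1.1 * T.1.2.1 * T.1.2.2).trace‖ /
        (opNorm p q T.1.1 * opNorm q r T.1.2.2 * opNorm r p T.1.2.1)) := by
  refine ⟨(l * m * n : ℕ), ?_⟩
  rintro x ⟨⟨⟨X, M, Y⟩, hX, hM, hY⟩, rfl⟩
  have h1 : 0 < opNorm p q X := opNorm_pos hp hq hX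
  have h2 : 0 < opNorm q r Y := opNorm_pos hq hr hY
  have h3 : 0 < opNorm r p M := opNorm_pos hr hp hM
  simp only
  rw [div_le_iff₀ (by positivity)]
  exact trace_bound hp hq hr X M Y

end mu

/-- Generalized Grothendieck–Hölder upper bound: if `K` bounds `‖μ_{l,m,n}‖_{1,2,∞}` for all
dimensions (in particular for the Grothendieck constant), then
`‖μ_{l,m,n}‖_{p,q,r} ≤ K · l^{|1/q−1/2|} m^{1−1/p} n^{1/r}`. -/
theorem stmt11 (𝕜 : Type*) [RCLike 𝕜] (K : ℝ)
    (hK : ∀ l m n : ℕ, muNorm 𝕜 1 2 ∞ l m n ≤ K)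
    (p q r : ℝ≥0∞) (hp : 1 ≤ p) (hq : 1 ≤ q) (hr : 1 ≤ r) (l m n : ℕ) :
    muNorm 𝕜 p q r l m n ≤
      K * ((l : ℝ) ^ |1 / q.toReal - 1 / 2| * (m : ℝ) ^ (1 - 1 / p.toReal) *
        (n : ℝ) ^ (1 / r.toReal)) := by
  have hK0 : 0 ≤ K := (muNorm_nonneg (𝕜 := 𝕜) 1 2 ∞ 0 0 0).trans (hK 0 0 0)
  have hRHS : 0 ≤ K * ((l : ℝ) ^ |1 / q.toReal - 1 / 2| * (m : ℝ) ^ (1 - 1 / p.toReal) *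
      (n : ℝ) ^ (1 / r.toReal)) := by positivity
  rcases Nat.eq_zero_or_pos l with hl | hl
  · subst hl
    have : IsEmpty {T : Matrix (Fin 0) (Fin m) 𝕜 × Matrix (Fin m) (Fin n) 𝕜 ×
        Matrix (Fin n) (Fin 0) 𝕜 // T.1 ≠ 0 ∧ T.2.1 ≠ 0 ∧ T.2.2 ≠ 0} :=
      ⟨fun T => T.2.1 (by ext i j; exact i.elim0)⟩
    unfold muNorm
    rw [Real.iSup_of_isEmpty]
    exact hRHS
  rcases Nat.eq_zero_or_pos m with hm | hm
  · subst hm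
    have : IsEmpty {T : Matrix (Fin l) (Fin 0) 𝕜 × Matrix (Fin 0) (Fin n) 𝕜 ×
        Matrix (Fin n) (Fin l) 𝕜 // T.1 ≠ 0 ∧ T.2.1 ≠ 0 ∧ T.2.2 ≠ 0} :=
      ⟨fun T => T.2.1 (by ext i j; exact j.elim0)⟩
    unfold muNorm
    rw [Real.iSup_of_isEmpty]
    exact hRHS
  rcases Nat.eq_zero_or_pos n with hn | hn
  · subst hn
    have : IsEmpty {T : Matrix (Fin l) (Fin m) 𝕜 × Matrix (Fin m) (Fin 0) 𝕜 ×
        Matrix (Fin 0) (Fin l) 𝕜 // T.1 ≠ 0 ∧ T.2.1 ≠ 0 ∧ T.2.2 ≠ 0} :=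
      ⟨fun T => T.2.2.1 (by ext i j; exact j.elim0)⟩
    unfold muNorm
    rw [Real.iSup_of_isEmpty]
    exact hRHS
  -- main case
  have hlR : (0:ℝ) < l := by exact_mod_cast hl
  have hmR : (0:ℝ) < m := by exact_mod_cast hm
  have hnR : (0:ℝ) < n := by exact_mod_cast hn
  have htwo : ((2 : ℝ≥0∞)).toReal = 2 := by simp
  have h12 : (1 : ℝ≥0∞) ≤ 2 := by norm_num
  -- the X-side and Y-side comparison constants
  have compare : ∀ (X : Matrix (Fin l) (Fin m) 𝕜) (Y : Matrix (Fin n) (Fin l) 𝕜),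
      ∃ cX cY : ℝ, 0 ≤ cX ∧ 0 ≤ cY ∧ cX * cY = (l : ℝ) ^ |1 / q.toReal - 1 / 2| ∧
        opNorm 1 2 X ≤ cX * opNorm p q X ∧ opNorm 2 ∞ Y ≤ cY * opNorm q r Y := by
    intro X Y
    rcases le_total q 2 with hq2 | hq2
    · have hq' : q ≠ ∞ := by
        intro h; rw [h] at hq2; exact (by norm_num : ¬ ((∞:ℝ≥0∞) ≤ 2)) (hq2)
      have htq : 1 ≤ q.toReal := one_le_toReal hq hq'
      have htq2 : q.toReal ≤ 2 := by
        have := ENNReal.toReal_mono (by norm_num : (2:ℝ≥0∞) ≠ ∞) hq2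
        rwa [htwo] at this
      have hexp : 0 ≤ 1 / q.toReal - 1 / 2 := by
        have : (1:ℝ)/2 ≤ 1/q.toReal := by
          apply one_div_le_one_div_of_le (by linarith) htq2
        linarith
      refine ⟨1, (l : ℝ) ^ (1 / q.toReal - 1 / 2), zero_le_one, by positivity, ?_, ?_, ?_⟩
      · rw [one_mul, abs_of_nonneg hexp]
      · have := opNorm_le_mul (b := 2) (b' := q) X le_rfl hp hq zero_le_one zero_le_one
          (fun v => by rw [one_mul]; exact lpNorm_antitone hq hq2 v)
          (fun v => by rw [one_mul]; exact lpNorm_antitone le_rfl hp v)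
        simpa using this
      · have := opNorm_le_mul (b := ∞) (b' := r) Y h12 hq hr (zero_le_one)
          (by positivity : (0:ℝ) ≤ (l : ℝ) ^ (1 / q.toReal - 1 / 2))
          (fun v => by rw [one_mul]; exact lpNorm_antitone hr le_top v)
          (fun v => by
            have := lpNorm_le_rpow_mul hq hq2 v
            rwa [htwo] at this)
        simpa using this
    · have hexp : 1 / q.toReal - 1 / 2 ≤ 0 := by
        by_cases hq' : q = ∞
        · rw [hq']; norm_num
        · have htq2 : 2 ≤ q.toReal := by
            have := ENNReal.toReal_mono hq' hq2
            rwa [htwo] at this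
          have : (1:ℝ)/q.toReal ≤ 1/2 := by
            apply one_div_le_one_div_of_le (by norm_num) htq2
          linarith
      refine ⟨(l : ℝ) ^ (1 / 2 - 1 / q.toReal), 1, by positivity, zero_le_one, ?_, ?_, ?_⟩
      · rw [mul_one, abs_of_nonpos hexp, neg_sub]
      · have := opNorm_le_mul (b := 2) (b' := q) X le_rfl hp hq
          (by positivity : (0:ℝ) ≤ (l : ℝ) ^ (1 / 2 - 1 / q.toReal)) zero_le_one
          (fun v => by
            have := lpNorm_le_rpow_mul h12 hq2 v
            rwa [htwo] at this)
          (fun v => by rw [one_mul]; exact lpNorm_antitone le_rfl hp v)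
        simpa using this
      · have := opNorm_le_mul (b := ∞) (b' := r) Y h12 hq hr zero_le_one zero_le_one
          (fun v => by rw [one_mul]; exact lpNorm_antitone hr le_top v)
          (fun v => by rw [one_mul]; exact lpNorm_antitone h12 hq2 v)
        simpa using this
  unfold muNorm
  have hne : Nonempty {T : Matrix (Fin l) (Fin m) 𝕜 × Matrix (Fin m) (Fin n) 𝕜 ×
      Matrix (Fin n) (Fin l) 𝕜 // T.1 ≠ 0 ∧ T.2.1 ≠ 0 ∧ T.2.2 ≠ 0} := by
    refine ⟨⟨(Matrix.of fun _ _ => 1, Matrix.of fun _ _ => 1, Matrix.of fun _ _ => 1),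
      ?_, ?_, ?_⟩⟩ <;>
    · intro h
      have := congrFun (congrFun h ⟨0, by omega⟩) ⟨0, by omega⟩
      simp [Matrix.zero_apply] at this
  apply ciSup_le
  rintro ⟨⟨X, M, Y⟩, hX, hM, hY⟩
  simp only
  obtain ⟨cX, cY, hcX, hcY, hprod, hXc, hYc⟩ := compare X Y
  have hMc : opNorm ∞ 1 M ≤
      ((m : ℝ) ^ (1 - 1 / p.toReal) * (n : ℝ) ^ (1 / r.toReal)) * opNorm r p M := by
    have := opNorm_le_mul M le_top hr hp
      (by positivity : (0:ℝ) ≤ (m : ℝ) ^ (1 - 1 / p.toReal))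
      (by positivity : (0:ℝ) ≤ (n : ℝ) ^ (1 / r.toReal))
      (fun v => by
        have := lpNorm_le_rpow_mul (le_refl (1 : ℝ≥0∞)) hp v
        simpa using this)
      (fun v => by
        have := lpNorm_le_rpow_mul hr le_top v
        simpa using this)
    exact this
  have hXpq : 0 < opNorm p q X := opNorm_pos hp hq hX
  have hYqr : 0 < opNorm q r Y := opNorm_pos hq hr hY
  have hMrp : 0 < opNorm r p M := opNorm_pos hr hp hM
  have hX12 : 0 < opNorm 1 2 X := opNorm_pos le_rfl h12 hX
  have hY2i : 0 < opNorm 2 ∞ Y := opNorm_pos h12 le_top hY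
  have hMi1 : 0 < opNorm (∞ : ℝ≥0∞) 1 M := opNorm_pos le_top le_rfl hM
  have hle12 : ‖(X * M * Y).trace‖ /
      (opNorm 1 2 X * opNorm 2 ∞ Y * opNorm ∞ 1 M) ≤ K :=
    le_trans (le_ciSup (muNorm_bddAbove 1 2 ∞ le_rfl h12 le_top l m n)
      ⟨(X, M, Y), hX, hM, hY⟩) (hK l m n)
  have htr12 : ‖(X * M * Y).trace‖ ≤
      K * (opNorm 1 2 X * opNorm 2 ∞ Y * opNorm ∞ 1 M) :=
    (div_le_iff₀ (by positivity)).1 hle12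
  set C : ℝ := (l : ℝ) ^ |1 / q.toReal - 1 / 2| * (m : ℝ) ^ (1 - 1 / p.toReal) *
      (n : ℝ) ^ (1 / r.toReal) with hC
  have hCpos : 0 < C := by rw [hC]; positivity
  have hD : opNorm 1 2 X * opNorm 2 ∞ Y * opNorm (∞ : ℝ≥0∞) 1 M ≤
      C * (opNorm p q X * opNorm q r Y * opNorm r p M) := by
    calc opNorm 1 2 X * opNorm 2 ∞ Y * opNorm (∞ : ℝ≥0∞) 1 M
        ≤ (cX * opNorm p q X) * (cY * opNorm q r Y) *
          (((m : ℝ) ^ (1 - 1 / p.toReal) * (n : ℝ) ^ (1 / r.toReal)) * opNorm r p M) := by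
          refine mul_le_mul (mul_le_mul hXc hYc hY2i.le ?_) hMc hMi1.le ?_
          · positivity
          · positivity
      _ = (cX * cY * ((m : ℝ) ^ (1 - 1 / p.toReal) * (n : ℝ) ^ (1 / r.toReal))) *
          (opNorm p q X * opNorm q r Y * opNorm r p M) := by ring
      _ = C * (opNorm p q X * opNorm q r Y * opNorm r p M) := by
          rw [hprod, hC]; ring
  rw [div_le_iff₀ (by positivity)]
  calc ‖(X * M * Y).trace‖ ≤ K * (opNorm 1 2 X * opNorm 2 ∞ Y * opNorm ∞ 1 M) := htr12
    _ ≤ K * (C * (opNorm p q X * opNorm q r Y * opNorm r p M)) :=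
        mul_le_mul_of_nonneg_left hD hK0
    _ = K * C * (opNorm p q X * opNorm q r Y * opNorm r p M) := by ring
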